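/- Suppose Ȳₖ ∈ ℝ (for k = 1,...,m) satisfy |S_k(n) - nμ - σB_k(n)| < Dψ(n) for Brownian motions B_k, where ψ(n) = o(√(n log log n)) and Ȳₖ = S_k(n)/n. If b = b(n) satisfies (b log log n)/n → 0, then (ab/(am-1))∑_{k=1}^m (Ȳₖ - μ)² → 0 almost surely as n → ∞, where a = n/b. -/

import Mathlib

open MeasureTheory ProbabilityTheory Filter Asymptotics

open Real Topology

/-! Fix ω. The law of the iterated logarithm and the strong invariance principle give
`S_k(n) - nμ = O(√(n log log n))`, hence `(Ȳₖ - μ)² = O(log log n / n)` for each of the finitely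
many chains. Since `b log log n / n → 0` forces `2b ≤ n` eventually, the prefactor
`ab/(am - 1) = n/(nm/b - 1)` is at most `2b`, so the whole expression is
`O(b log log n / n)`, which tends to `0`. -/

theorem tendsto_log_log_natCast_atTop :
    Tendsto (fun n : ℕ => log (log n)) atTop atTop :=
  tendsto_log_atTop.comp (tendsto_log_atTop.comp tendsto_natCast_atTop_atTop)

theorem isBigO_sqrt_of_abs_le_sqrt_two_mul {α : Type*} {l : Filter α} {f x y : α → ℝ} {c : ℝ}
    (h : ∀ᶠ a in l, |f a| ≤ c * √(2 * x a * y a)) :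
    f =O[l] fun a => √(x a * y a) :=
  IsBigO.of_bound (c * √2) <| h.mono fun a ha => by
    rw [mul_assoc 2, sqrt_mul zero_le_two, ← mul_assoc] at ha
    simpa only [norm_eq_abs, abs_of_nonneg (sqrt_nonneg _)] using ha

theorem isBigO_of_abs_sub_const_mul_le {α : Type*} {l : Filter α} {X Y ψ g : α → ℝ} {σ d : ℝ}
    (h : ∀ᶠ a in l, |X a - σ * Y a| ≤ d * ψ a) (hY : Y =O[l] g) (hψ : ψ =O[l] g) :
    X =O[l] g := by
  have hres : (fun a => X a - σ * Y a) =O[l] ψ :=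
    IsBigO.of_bound |d| <| h.mono fun a ha =>
      ha.trans <| (le_abs_self _).trans (abs_mul d (ψ a)).le
  simpa using (hres.trans hψ).add (hY.const_mul_left σ)

theorem isBigO_div_natCast_sub_sq {x L : ℕ → ℝ} {μ : ℝ}
    (h : (fun n => x n - n * μ) =O[atTop] fun n => √(n * L n)) (hL : ∀ᶠ n in atTop, 0 ≤ L n) :
    (fun n : ℕ => (x n / n - μ) ^ 2) =O[atTop] fun n => L n / n := by
  have hsq : (fun n => (x n - n * μ) ^ 2 * ((n : ℝ) ^ 2)⁻¹) =O[atTop]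
      fun n => √(n * L n) ^ 2 * ((n : ℝ) ^ 2)⁻¹ :=
    (h.pow 2).mul (isBigO_refl _ _)
  refine hsq.congr' ?_ ?_
  · filter_upwards [eventually_ne_atTop 0] with n hn
    have : (n : ℝ) ≠ 0 := Nat.cast_ne_zero.2 hn
    field_simp
  · filter_upwards [hL, eventually_ne_atTop 0] with n hLn hn
    have : (n : ℝ) ≠ 0 := Nat.cast_ne_zero.2 hn
    rw [sq_sqrt (mul_nonneg n.cast_nonneg hLn)]
    field_simp

theorem abs_div_mul_div_mul_sub_one_le {n b m : ℝ} (hb : 0 ≤ b) (hbn : 2 * b ≤ n) (hm : 1 ≤ m) :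
    |n / b * b / (n / b * m - 1)| ≤ 2 * b := by
  rcases hb.eq_or_lt with rfl | hb
  · simp
  have hnb : 2 ≤ n / b := by rw [le_div_iff₀ hb]; linarith
  have hden : 0 < n / b * m - 1 := by nlinarith
  have hexpand : 2 * b * (n / b * m - 1) = 2 * n * m - 2 * b := by field_simp
  rw [div_mul_cancel₀ n hb.ne', abs_of_nonneg (div_nonneg (by linarith) hden.le),
    div_le_iff₀ hden, hexpand]
  nlinarith

theorem eventually_two_mul_le_of_tendsto_mul_div {b L : ℕ → ℝ}
    (hbL : Tendsto (fun n => b n * L n / n) atTop (𝓝 0)) (hL : ∀ᶠ n in atTop, 1 ≤ L n) :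
    ∀ᶠ n : ℕ in atTop, 2 * b n ≤ n := by
  filter_upwards [hbL.eventually_le_const one_half_pos, hL, eventually_gt_atTop 0]
    with n hsmall hLn hn
  have hn : (0 : ℝ) < n := Nat.cast_pos.2 hn
  rw [div_le_iff₀ hn] at hsmall
  nlinarith

theorem rbm_mean_deviation_vanishes_general {Ω : Type*} [MeasureSpace Ω]
    (m : ℕ) (hm : 1 ≤ m) (μ σ : ℝ)
    (S B : Fin m → ℕ → Ω → ℝ) (D : Ω → ℝ) (ψ : ℕ → ℝ) (b : ℕ → ℕ)
    (hψ : ψ =o[atTop] (fun n : ℕ => Real.sqrt (n * Real.log (Real.log n))))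
    (hSIP : ∀ᵐ ω ∂ℙ, ∀ k, ∀ n : ℕ, |S k n ω - n * μ - σ * B k n ω| < D ω * ψ n)
    (hLIL : ∀ᵐ ω ∂ℙ, ∀ k, ∀ ε > (0 : ℝ), ∃ N, ∀ n ≥ N,
      |B k n ω| ≤ (1 + ε) * Real.sqrt (2 * n * Real.log (Real.log n)))
    (hbn : Tendsto (fun n => (b n : ℝ) * Real.log (Real.log n) / n) atTop (nhds 0)) :
    ∀ᵐ ω ∂ℙ, Tendsto (fun n : ℕ =>
        (((n : ℝ) / (b n : ℝ)) * (b n : ℝ) / (((n : ℝ) / (b n : ℝ)) * m - 1)) *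
          ∑ k, (S k n ω / n - μ) ^ 2) atTop (nhds 0) := by
  filter_upwards [hSIP, hLIL] with ω hS hL
  have hB (k : Fin m) : (fun n => B k n ω) =O[atTop] fun n : ℕ => √(n * log (log n)) := by
    obtain ⟨N, hN⟩ := hL k 1 one_pos
    exact isBigO_sqrt_of_abs_le_sqrt_two_mul (eventually_atTop.2 ⟨N, hN⟩)
  have hdev (k : Fin m) : (fun n : ℕ => (S k n ω / n - μ) ^ 2) =O[atTop]
      fun n : ℕ => log (log n) / n :=
    isBigO_div_natCast_sub_sq
      (isBigO_of_abs_sub_const_mul_le (.of_forall fun n => (hS k n).le) (hB k) hψ.isBigO)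
      (tendsto_log_log_natCast_atTop.eventually_ge_atTop 0)
  have hcoef : (fun n : ℕ => (n : ℝ) / b n * b n / ((n : ℝ) / b n * m - 1)) =O[atTop]
      fun n => (b n : ℝ) := by
    refine IsBigO.of_bound 2 ?_
    filter_upwards [eventually_two_mul_le_of_tendsto_mul_div hbn
      (tendsto_log_log_natCast_atTop.eventually_ge_atTop 1)] with n hn
    simpa only [norm_eq_abs, Nat.abs_cast] using
      abs_div_mul_div_mul_sub_one_le (b n).cast_nonneg hn (Nat.one_le_cast.2 hm)
  refine (hcoef.mul (IsBigO.fun_sum fun k _ => hdev k)).trans_tendsto ?_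
  simpa only [mul_div_assoc] using hbn

/-- Key lemma in the strong consistency proof of the RBM estimator: if the partial sums
`S_k(n)` satisfy a strong invariance principle `|S_k(n) - nμ - σB_k(n)| < Dψ(n)` with
`ψ(n) = o(√(n log log n))`, the `B_k` satisfy the law-of-the-iterated-logarithm bound,
and `(b log log n)/n → 0`, then with `Ȳₖ = S_k(n)/n` and `a = n/b`,
`(ab/(am-1)) ∑ₖ (Ȳₖ - μ)² → 0` almost surely. -/
theorem rbm_mean_deviation_vanishes {Ω : Type*} [MeasureSpace Ω]
    [IsProbabilityMeasure (ℙ : Measure Ω)]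
    (m : ℕ) (hm : 1 ≤ m) (μ σ : ℝ)
    (S B : Fin m → ℕ → Ω → ℝ) (D : Ω → ℝ) (ψ : ℕ → ℝ) (b : ℕ → ℕ)
    (hb : ∀ n, 1 ≤ b n)
    (hψ : ψ =o[atTop] (fun n : ℕ => Real.sqrt (n * Real.log (Real.log n))))
    (hSIP : ∀ᵐ ω ∂ℙ, ∀ k, ∀ n : ℕ, |S k n ω - n * μ - σ * B k n ω| < D ω * ψ n)
    (hLIL : ∀ᵐ ω ∂ℙ, ∀ k, ∀ ε > (0 : ℝ), ∃ N, ∀ n ≥ N,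
      |B k n ω| ≤ (1 + ε) * Real.sqrt (2 * n * Real.log (Real.log n)))
    (hbn : Tendsto (fun n => (b n : ℝ) * Real.log (Real.log n) / n) atTop (nhds 0)) :
    ∀ᵐ ω ∂ℙ, Tendsto (fun n : ℕ =>
        (((n : ℝ) / (b n : ℝ)) * (b n : ℝ) / (((n : ℝ) / (b n : ℝ)) * m - 1)) *
          ∑ k, (S k n ω / n - μ) ^ 2) atTop (nhds 0) :=
  rbm_mean_deviation_vanishes_general m hm μ σ S B D ψ b hψ hSIP hLIL hbn
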